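/- Let β : ℝ → ℝ be locally Lipschitz on bounded intervals and directionally differentiable at every point. Let D ⊆ ℝ^N have finite measure and let y, u ∈ L^∞(D). Then the function x ↦ β'(y(x); u(x)) is in L^∞(D), and ‖(β(y + τu) - β(y))/τ - β'(y; u)‖_{L²(D)} → 0 as τ ↘ 0; i.e. the Nemytskii operator β : L^∞(D) → L²(D) is directionally differentiable with directional derivative given by the pointwise directional derivative. -/
import Mathlib

open MeasureTheory Topology Filter

theorem beta_cont (β : ℝ → ℝ) (L : ℝ → ℝ)
    (hL : ∀ M > 0, 0 < L M ∧ ∀ z₁ ∈ Set.Icc (-M) M, ∀ z₂ ∈ Set.Icc (-M) M,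
      |β z₁ - β z₂| ≤ L M * |z₁ - z₂|) : Continuous β := by
  rw [continuous_iff_continuousAt]
  intro z
  have hM : (0:ℝ) < |z| + 1 := by positivity
  obtain ⟨hL0, hlip⟩ := hL (|z|+1) hM
  have : LipschitzOnWith (Real.toNNReal (L (|z|+1))) β (Set.Icc (-(|z|+1)) (|z|+1)) := by
    intro a ha b hb
    rw [edist_dist, edist_dist, ← ENNReal.ofReal_coe_nnreal,
      Real.coe_toNNReal _ hL0.le, ← ENNReal.ofReal_mul hL0.le]
    exact ENNReal.ofReal_le_ofReal (by simpa [Real.dist_eq] using hlip a ha b hb)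
  refine (this.continuousOn).continuousAt ?_
  exact Icc_mem_nhds (by cases abs_cases z <;> linarith) (by cases abs_cases z <;> linarith)

theorem stmt_17 {α : Type*} [MeasurableSpace α] (μ : Measure α) [IsFiniteMeasure μ]
    (β : ℝ → ℝ) (L : ℝ → ℝ)
    (hL : ∀ M > 0, 0 < L M ∧ ∀ z₁ ∈ Set.Icc (-M) M, ∀ z₂ ∈ Set.Icc (-M) M,
      |β z₁ - β z₂| ≤ L M * |z₁ - z₂|)
    (β' : ℝ → ℝ → ℝ)
    (hdd : ∀ z d : ℝ,
      Tendsto (fun τ : ℝ => (β (z + τ * d) - β z) / τ) (𝓝[>] 0) (𝓝 (β' z d)))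
    (y u : α → ℝ) (hy : Measurable y) (hu : Measurable u)
    (M : ℝ) (hM : 0 < M) (hyb : ∀ᵐ x ∂μ, |y x| ≤ M) (hub : ∀ᵐ x ∂μ, |u x| ≤ M) :
    (∃ C : ℝ, ∀ᵐ x ∂μ, |β' (y x) (u x)| ≤ C) ∧
    Tendsto (fun τ : ℝ =>
        ∫ x, ((β (y x + τ * u x) - β (y x)) / τ - β' (y x) (u x)) ^ 2 ∂μ)
      (𝓝[>] 0) (𝓝 0) := by
  have hβc : Continuous β := beta_cont β L hL
  obtain ⟨hL0, hlip⟩ := hL (2*M) (by linarith)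
  set C : ℝ := L (2*M) * M with hC
  -- the eventual small-τ set
  have hIoc : Set.Ioc (0:ℝ) 1 ∈ 𝓝[>] (0:ℝ) :=
    Ioc_mem_nhdsGT_of_mem ⟨le_refl 0, one_pos⟩
  -- key pointwise bound
  have key : ∀ z d : ℝ, |z| ≤ M → |d| ≤ M → ∀ τ ∈ Set.Ioc (0:ℝ) 1,
      |(β (z + τ * d) - β z) / τ| ≤ C := by
    intro z d hz hd τ hτ
    have hτ0 : 0 < τ := hτ.1
    have h1 : |z + τ * d| ≤ 2*M := by
      calc |z + τ * d| ≤ |z| + |τ * d| := abs_add_le _ _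
        _ ≤ M + 1 * M := by
            refine add_le_add hz ?_
            rw [abs_mul]
            exact mul_le_mul (by rw [abs_of_pos hτ0]; exact hτ.2) hd (abs_nonneg _) one_pos.le
        _ = 2*M := by ring
    have h2 : |z| ≤ 2*M := by linarith
    have hb : |β (z + τ * d) - β z| ≤ L (2*M) * |τ * d| := by
      have := hlip (z + τ * d) (Set.mem_Icc.mpr (abs_le.mp h1)) z (Set.mem_Icc.mpr (abs_le.mp h2))
      simpa using this
    rw [abs_div, abs_of_pos hτ0, div_le_iff₀ hτ0]
    calc |β (z + τ * d) - β z| ≤ L (2*M) * |τ * d| := hb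
      _ = L (2*M) * |d| * τ := by rw [abs_mul, abs_of_pos hτ0]; ring
      _ ≤ C * τ := by
          refine mul_le_mul_of_nonneg_right ?_ hτ0.le
          exact mul_le_mul_of_nonneg_left hd hL0.le
  -- a.e. bound on β'
  have hb' : ∀ᵐ x ∂μ, |β' (y x) (u x)| ≤ C := by
    filter_upwards [hyb, hub] with x hxy hxu
    have habs : Tendsto (fun τ : ℝ => |(β (y x + τ * u x) - β (y x)) / τ|)
        (𝓝[>] 0) (𝓝 |β' (y x) (u x)|) := (hdd (y x) (u x)).abs
    refine le_of_tendsto habs ?_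
    filter_upwards [hIoc] with τ hτ
    exact key (y x) (u x) hxy hxu τ hτ
  refine ⟨⟨C, hb'⟩, ?_⟩
  -- measurability of β' (y ·) (u ·)
  have hquot_meas : ∀ τ : ℝ, Measurable (fun x => (β (y x + τ * u x) - β (y x)) / τ) := by
    intro τ
    exact ((hβc.measurable.comp (hy.add (hu.const_mul τ))).sub
      (hβc.measurable.comp hy)).div_const τ
  have hg : Measurable (fun x => β' (y x) (u x)) := by
    have hseq : Tendsto (fun n : ℕ => (1:ℝ)/(n+1)) atTop (𝓝[>] 0) := by
      refine tendsto_nhdsWithin_of_tendsto_nhds_of_eventually_within _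
        tendsto_one_div_add_atTop_nhds_zero_nat ?_
      exact Eventually.of_forall fun n => Set.mem_Ioi.mpr (by positivity)
    refine measurable_of_tendsto_metrizable
      (f := fun n x => (β (y x + ((1:ℝ)/(n+1)) * u x) - β (y x)) / ((1:ℝ)/(n+1)))
      (fun n => hquot_meas _) ?_
    rw [tendsto_pi_nhds]
    intro x
    exact (hdd (y x) (u x)).comp hseq
  -- dominated convergence
  have main : Tendsto (fun τ : ℝ =>
      ∫ x, ((β (y x + τ * u x) - β (y x)) / τ - β' (y x) (u x)) ^ 2 ∂μ)
      (𝓝[>] 0) (𝓝 (∫ _, (0:ℝ) ∂μ)) := by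
    refine tendsto_integral_filter_of_dominated_convergence (fun _ => (2*C)^2)
      ?_ ?_ ?_ ?_
    · exact Eventually.of_forall fun τ =>
        (((hquot_meas τ).sub hg).pow_const 2).aestronglyMeasurable
    · filter_upwards [hIoc] with τ hτ
      filter_upwards [hyb, hub, hb'] with x hxy hxu hxb
      have h1 := key (y x) (u x) hxy hxu τ hτ
      have : |(β (y x + τ * u x) - β (y x)) / τ - β' (y x) (u x)| ≤ 2*C := by
        calc |(β (y x + τ * u x) - β (y x)) / τ - β' (y x) (u x)|
            ≤ |(β (y x + τ * u x) - β (y x)) / τ| + |β' (y x) (u x)| := abs_sub _ _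
          _ ≤ C + C := add_le_add h1 hxb
          _ = 2*C := by ring
      rw [Real.norm_eq_abs, abs_of_nonneg (sq_nonneg _), ← sq_abs]
      exact pow_le_pow_left₀ (abs_nonneg _) this 2
    · exact integrable_const _
    · filter_upwards [] with x
      have : Tendsto (fun τ : ℝ => (β (y x + τ * u x) - β (y x)) / τ - β' (y x) (u x))
          (𝓝[>] 0) (𝓝 0) := by
        simpa using (hdd (y x) (u x)).sub_const (β' (y x) (u x))
      simpa using this.pow 2

  simpa using main
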